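/- Define the linear substitution x_1 = z_0 y_1, x_2 = z_0 y_2 + z_1 y_1, x_3 = z_0 y_3 + z_1 y_2, x_4 = z_1 y_3, x_5 = z_0 y_4, x_6 = z_0 y_5 + z_1 y_4, x_7 = z_0 y_6 + z_1 y_5, x_8 = z_1 y_6. Then for every k ≥ -1, the induced linear map γ from four copies of the space of degree (k+1) homogeneous polynomials in x_1,...,x_8 to the space of bihomogeneous polynomials of bidegree (k+4, k+1) in (z_0, z_1) and (y_1,...,y_6) is surjective. -/
import Mathlib


open MvPolynomial

/-- The variables `z₀, z₁` of the target bigraded ring. -/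
noncomputable def zv (j : Fin 2) : MvPolynomial (Fin 2 ⊕ Fin 6) ℂ := X (Sum.inl j)

/-- The variables `y₁, …, y₆` of the target bigraded ring. -/
noncomputable def yv (i : Fin 6) : MvPolynomial (Fin 2 ⊕ Fin 6) ℂ := X (Sum.inr i)

/-- The substitution `x₁ = z₀y₁, x₂ = z₀y₂ + z₁y₁, x₃ = z₀y₃ + z₁y₂, x₄ = z₁y₃,
`x₅ = z₀y₄, x₆ = z₀y₅ + z₁y₄, x₇ = z₀y₆ + z₁y₅, x₈ = z₁y₆`. -/
noncomputable def subst : Fin 8 → MvPolynomial (Fin 2 ⊕ Fin 6) ℂ :=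
  ![zv 0 * yv 0, zv 0 * yv 1 + zv 1 * yv 0, zv 0 * yv 2 + zv 1 * yv 1, zv 1 * yv 2,
    zv 0 * yv 3, zv 0 * yv 4 + zv 1 * yv 3, zv 0 * yv 5 + zv 1 * yv 4, zv 1 * yv 5]

/-- The map `γ` sending `(g₁,g₂,g₃,g₄)` to `z₀³σ(g₁) + z₀²z₁σ(g₂) + z₀z₁²σ(g₃) + z₁³σ(g₄)`. -/
noncomputable def gammaMap (g : Fin 4 → MvPolynomial (Fin 8) ℂ) :
    MvPolynomial (Fin 2 ⊕ Fin 6) ℂ :=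
  zv 0 ^ 3 * aeval subst (g 0) + zv 0 ^ 2 * zv 1 * aeval subst (g 1) +
    zv 0 * zv 1 ^ 2 * aeval subst (g 2) + zv 1 ^ 3 * aeval subst (g 3)

def Im (n : ℕ) : Set (MvPolynomial (Fin 2 ⊕ Fin 6) ℂ) :=
  {P | ∃ g : Fin 4 → MvPolynomial (Fin 8) ℂ, (∀ i, (g i).IsHomogeneous n) ∧ gammaMap g = P}

lemma Im_zero (n : ℕ) : (0 : MvPolynomial (Fin 2 ⊕ Fin 6) ℂ) ∈ Im n :=
  ⟨0, fun _ => isHomogeneous_zero _ _ _, by simp [gammaMap]⟩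

lemma Im_add {n : ℕ} {P Q : MvPolynomial (Fin 2 ⊕ Fin 6) ℂ} (hP : P ∈ Im n) (hQ : Q ∈ Im n) :
    P + Q ∈ Im n := by
  obtain ⟨g, hg, rfl⟩ := hP
  obtain ⟨g', hg', rfl⟩ := hQ
  exact ⟨g + g', fun i => (hg i).add (hg' i), by simp [gammaMap]; ring⟩

lemma Im_smul {n : ℕ} (c : ℂ) {P : MvPolynomial (Fin 2 ⊕ Fin 6) ℂ} (hP : P ∈ Im n) :
    c • P ∈ Im n := by
  obtain ⟨g, hg, rfl⟩ := hP
  refine ⟨fun i => C c * g i, fun i => ?_, ?_⟩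
  · simpa using (isHomogeneous_C (Fin 8) c).mul (hg i)
  · simp [gammaMap, smul_eq_C_mul, map_mul]; ring

lemma Im_sub {n : ℕ} {P Q : MvPolynomial (Fin 2 ⊕ Fin 6) ℂ} (hP : P ∈ Im n) (hQ : Q ∈ Im n) :
    P - Q ∈ Im n := by
  have := Im_add hP (Im_smul (-1) hQ)
  simpa [sub_eq_add_neg] using this

lemma Im_step {n : ℕ} (j : Fin 8) {Q : MvPolynomial (Fin 2 ⊕ Fin 6) ℂ} (hQ : Q ∈ Im n) :
    subst j * Q ∈ Im (n + 1) := by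
  obtain ⟨g, hg, rfl⟩ := hQ
  refine ⟨fun i => X j * g i, fun i => ?_, ?_⟩
  · simpa [add_comm] using (isHomogeneous_X ℂ j).mul (hg i)
  · simp [gammaMap, map_mul, aeval_X]; ring

lemma subst0 : subst 0 = zv 0 * yv 0 := rfl
lemma subst1 : subst 1 = zv 0 * yv 1 + zv 1 * yv 0 := rfl
lemma subst2 : subst 2 = zv 0 * yv 2 + zv 1 * yv 1 := rfl
lemma subst3 : subst 3 = zv 1 * yv 2 := rfl
lemma subst4 : subst 4 = zv 0 * yv 3 := rfl
lemma subst5 : subst 5 = zv 0 * yv 4 + zv 1 * yv 3 := rfl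
lemma subst6 : subst 6 = zv 0 * yv 5 + zv 1 * yv 4 := rfl
lemma subst7 : subst 7 = zv 1 * yv 5 := rfl

noncomputable def T (a b : ℕ) (m : Fin 6 → ℕ) : MvPolynomial (Fin 2 ⊕ Fin 6) ℂ :=
  zv 0 ^ a * zv 1 ^ b * ∏ i, yv i ^ m i

lemma T_zero (a b : ℕ) : T a b (fun _ => 0) = zv 0 ^ a * zv 1 ^ b := by
  simp [T]

lemma base (a b : ℕ) (h : a + b = 3) : zv 0 ^ a * zv 1 ^ b ∈ Im 0 := by
  have hh : a = 3 ∧ b = 0 ∨ a = 2 ∧ b = 1 ∨ a = 1 ∧ b = 2 ∨ a = 0 ∧ b = 3 := by omega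
  have hom : ∀ g : Fin 4 → MvPolynomial (Fin 8) ℂ,
      (∀ i, g i = 0 ∨ g i = 1) → ∀ i, (g i).IsHomogeneous 0 := by
    intro g hg i
    rcases hg i with h | h <;> rw [h]
    · exact isHomogeneous_zero _ _ _
    · exact isHomogeneous_one _ _
  rcases hh with ⟨rfl, rfl⟩ | ⟨rfl, rfl⟩ | ⟨rfl, rfl⟩ | ⟨rfl, rfl⟩
  · exact ⟨![1,0,0,0], hom _ (by intro i; fin_cases i <;> simp), by simp [gammaMap]⟩
  · exact ⟨![0,1,0,0], hom _ (by intro i; fin_cases i <;> simp), by simp [gammaMap]⟩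
  · exact ⟨![0,0,1,0], hom _ (by intro i; fin_cases i <;> simp), by simp [gammaMap]⟩
  · exact ⟨![0,0,0,1], hom _ (by intro i; fin_cases i <;> simp), by simp [gammaMap]⟩

section Chains

variable {n : ℕ}
  (IH : ∀ (a b : ℕ) (m : Fin 6 → ℕ), a + b = n + 3 → (∑ i, m i) = n → T a b m ∈ Im n)

include IH

lemma cP0 (a b : ℕ) (m : Fin 6 → ℕ) (h : a + b = n + 3) (hm : (∑ i, m i) = n) :
    zv 0 * yv 0 * T a b m ∈ Im (n + 1) := by
  have := Im_step 0 (IH a b m h hm); rwa [subst0] at this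

lemma cP2 (a b : ℕ) (m : Fin 6 → ℕ) (h : a + b = n + 3) (hm : (∑ i, m i) = n) :
    zv 1 * yv 2 * T a b m ∈ Im (n + 1) := by
  have := Im_step 3 (IH a b m h hm); rwa [subst3] at this

lemma cP3 (a b : ℕ) (m : Fin 6 → ℕ) (h : a + b = n + 3) (hm : (∑ i, m i) = n) :
    zv 0 * yv 3 * T a b m ∈ Im (n + 1) := by
  have := Im_step 4 (IH a b m h hm); rwa [subst4] at this

lemma cP5 (a b : ℕ) (m : Fin 6 → ℕ) (h : a + b = n + 3) (hm : (∑ i, m i) = n) :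
    zv 1 * yv 5 * T a b m ∈ Im (n + 1) := by
  have := Im_step 7 (IH a b m h hm); rwa [subst7] at this

lemma cD1 (a b : ℕ) (m : Fin 6 → ℕ) (h : a + b = n + 2) (hm : (∑ i, m i) = n) :
    zv 0 ^ 2 * yv 1 * T a b m ∈ Im (n + 1) := by
  have e : zv 0 ^ 2 * yv 1 * T a b m
      = subst 1 * T (a + 1) b m - subst 0 * T a (b + 1) m := by
    simp only [T, subst0, subst1]; ring
  rw [e]
  exact Im_sub (Im_step 1 (IH _ _ m (by omega) hm)) (Im_step 0 (IH _ _ m (by omega) hm))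

lemma cD2 (a b : ℕ) (m : Fin 6 → ℕ) (h : a + b = n + 1) (hm : (∑ i, m i) = n) :
    zv 0 ^ 3 * yv 2 * T a b m ∈ Im (n + 1) := by
  have e : zv 0 ^ 3 * yv 2 * T a b m
      = subst 2 * T (a + 2) b m - zv 0 ^ 2 * yv 1 * T a (b + 1) m := by
    simp only [T, subst2]; ring
  rw [e]
  exact Im_sub (Im_step 2 (IH _ _ m (by omega) hm)) (cD1 IH a (b + 1) m (by omega) hm)

lemma cU1 (a b : ℕ) (m : Fin 6 → ℕ) (h : a + b = n + 2) (hm : (∑ i, m i) = n) :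
    zv 1 ^ 2 * yv 1 * T a b m ∈ Im (n + 1) := by
  have e : zv 1 ^ 2 * yv 1 * T a b m
      = subst 2 * T a (b + 1) m - subst 3 * T (a + 1) b m := by
    simp only [T, subst2, subst3]; ring
  rw [e]
  exact Im_sub (Im_step 2 (IH _ _ m (by omega) hm)) (Im_step 3 (IH _ _ m (by omega) hm))

lemma cU0 (a b : ℕ) (m : Fin 6 → ℕ) (h : a + b = n + 1) (hm : (∑ i, m i) = n) :
    zv 1 ^ 3 * yv 0 * T a b m ∈ Im (n + 1) := by
  have e : zv 1 ^ 3 * yv 0 * T a b m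
      = subst 1 * T a (b + 2) m - zv 1 ^ 2 * yv 1 * T (a + 1) b m := by
    simp only [T, subst1]; ring
  rw [e]
  exact Im_sub (Im_step 1 (IH _ _ m (by omega) hm)) (cU1 IH (a + 1) b m (by omega) hm)

lemma cD4 (a b : ℕ) (m : Fin 6 → ℕ) (h : a + b = n + 2) (hm : (∑ i, m i) = n) :
    zv 0 ^ 2 * yv 4 * T a b m ∈ Im (n + 1) := by
  have e : zv 0 ^ 2 * yv 4 * T a b m
      = subst 5 * T (a + 1) b m - subst 4 * T a (b + 1) m := by
    simp only [T, subst4, subst5]; ring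
  rw [e]
  exact Im_sub (Im_step 5 (IH _ _ m (by omega) hm)) (Im_step 4 (IH _ _ m (by omega) hm))

lemma cD5 (a b : ℕ) (m : Fin 6 → ℕ) (h : a + b = n + 1) (hm : (∑ i, m i) = n) :
    zv 0 ^ 3 * yv 5 * T a b m ∈ Im (n + 1) := by
  have e : zv 0 ^ 3 * yv 5 * T a b m
      = subst 6 * T (a + 2) b m - zv 0 ^ 2 * yv 4 * T a (b + 1) m := by
    simp only [T, subst6]; ring
  rw [e]
  exact Im_sub (Im_step 6 (IH _ _ m (by omega) hm)) (cD4 IH a (b + 1) m (by omega) hm)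

lemma cU4 (a b : ℕ) (m : Fin 6 → ℕ) (h : a + b = n + 2) (hm : (∑ i, m i) = n) :
    zv 1 ^ 2 * yv 4 * T a b m ∈ Im (n + 1) := by
  have e : zv 1 ^ 2 * yv 4 * T a b m
      = subst 6 * T a (b + 1) m - subst 7 * T (a + 1) b m := by
    simp only [T, subst6, subst7]; ring
  rw [e]
  exact Im_sub (Im_step 6 (IH _ _ m (by omega) hm)) (Im_step 7 (IH _ _ m (by omega) hm))

lemma cU3 (a b : ℕ) (m : Fin 6 → ℕ) (h : a + b = n + 1) (hm : (∑ i, m i) = n) :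
    zv 1 ^ 3 * yv 3 * T a b m ∈ Im (n + 1) := by
  have e : zv 1 ^ 3 * yv 3 * T a b m
      = subst 5 * T a (b + 2) m - zv 1 ^ 2 * yv 4 * T (a + 1) b m := by
    simp only [T, subst5]; ring
  rw [e]
  exact Im_sub (Im_step 5 (IH _ _ m (by omega) hm)) (cU4 IH (a + 1) b m (by omega) hm)

end Chains

lemma prod_split (m : Fin 6 → ℕ) (i : Fin 6) (k : ℕ) (hk : m i = k + 1) :
    ∏ j, yv j ^ m j = yv i * ∏ j, yv j ^ Function.update m i k j := by
  rw [← Finset.mul_prod_erase Finset.univ (fun j => yv j ^ m j) (Finset.mem_univ i),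
    ← Finset.mul_prod_erase Finset.univ (fun j => yv j ^ Function.update m i k j)
      (Finset.mem_univ i)]
  have h2 : ∏ j ∈ Finset.univ.erase i, yv j ^ Function.update m i k j
      = ∏ j ∈ Finset.univ.erase i, yv j ^ m j :=
    Finset.prod_congr rfl fun j hj => by
      rw [Function.update_of_ne (Finset.ne_of_mem_erase hj)]
  rw [h2, Function.update_self, hk, ← mul_assoc, pow_succ']

lemma fm0 (h : 0 < 6) : (⟨0, h⟩ : Fin 6) = 0 := rfl
lemma fm1 (h : 1 < 6) : (⟨1, h⟩ : Fin 6) = 1 := rfl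
lemma fm2 (h : 2 < 6) : (⟨2, h⟩ : Fin 6) = 2 := rfl
lemma fm3 (h : 3 < 6) : (⟨3, h⟩ : Fin 6) = 3 := rfl
lemma fm4 (h : 4 < 6) : (⟨4, h⟩ : Fin 6) = 4 := rfl
lemma fm5 (h : 5 < 6) : (⟨5, h⟩ : Fin 6) = 5 := rfl

lemma key : ∀ (n a b : ℕ) (m : Fin 6 → ℕ), a + b = n + 3 → (∑ i, m i) = n →
    T a b m ∈ Im n := by
  intro n
  induction n with
  | zero =>
    intro a b m h hm
    have hm0 : ∀ i, m i = 0 := by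
      intro i
      have := Finset.sum_eq_zero_iff.mp hm
      exact this i (Finset.mem_univ i)
    have : m = fun _ => 0 := funext hm0
    rw [this, T_zero]
    exact base a b h
  | succ n IH =>
    intro a b m h hm
    have hex : ∃ i, m i ≠ 0 := by
      by_contra hc
      push_neg at hc
      simp only [hc, Finset.sum_const_zero] at hm
      omega
    obtain ⟨i, hi⟩ := hex
    set m' := Function.update m i (m i - 1) with hm'def
    have hk : m i = (m i - 1) + 1 := by omega
    have hx : ∏ j, yv j ^ m j = yv i * ∏ j, yv j ^ m' j := prod_split m i (m i - 1) hk
    have hsum : (∑ j, m' j) = n := by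
      have h1 : (∑ j, m' j) = (m i - 1) + ∑ j ∈ Finset.univ.erase i, m j := by
        rw [hm'def, Finset.sum_update_of_mem (Finset.mem_univ i),
          Finset.sdiff_singleton_eq_erase]
      have h2 : m i + ∑ j ∈ Finset.univ.erase i, m j = n + 1 := by
        rw [Finset.add_sum_erase Finset.univ m (Finset.mem_univ i)]; exact hm
      omega
    fin_cases i <;> simp only [fm0, fm1, fm2, fm3, fm4, fm5] at hx
    · -- i = 0
      rcases Nat.lt_or_ge a 1 with h1 | h1
      · obtain ⟨b₀, rfl⟩ : ∃ b₀, b = b₀ + 3 := ⟨b - 3, by omega⟩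
        have e : T a (b₀ + 3) m = zv 1 ^ 3 * yv 0 * T a b₀ m' := by
          simp only [T, hx]; ring
        rw [e]; exact cU0 IH a b₀ m' (by omega) hsum
      · obtain ⟨a₀, rfl⟩ : ∃ a₀, a = a₀ + 1 := ⟨a - 1, by omega⟩
        have e : T (a₀ + 1) b m = zv 0 * yv 0 * T a₀ b m' := by
          simp only [T, hx]; ring
        rw [e]; exact cP0 IH a₀ b m' (by omega) hsum
    · -- i = 1
      rcases Nat.lt_or_ge b 2 with h1 | h1
      · obtain ⟨a₀, rfl⟩ : ∃ a₀, a = a₀ + 2 := ⟨a - 2, by omega⟩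
        have e : T (a₀ + 2) b m = zv 0 ^ 2 * yv 1 * T a₀ b m' := by
          simp only [T, hx]; ring
        rw [e]; exact cD1 IH a₀ b m' (by omega) hsum
      · obtain ⟨b₀, rfl⟩ : ∃ b₀, b = b₀ + 2 := ⟨b - 2, by omega⟩
        have e : T a (b₀ + 2) m = zv 1 ^ 2 * yv 1 * T a b₀ m' := by
          simp only [T, hx]; ring
        rw [e]; exact cU1 IH a b₀ m' (by omega) hsum
    · -- i = 2
      rcases Nat.lt_or_ge b 1 with h1 | h1
      · obtain ⟨a₀, rfl⟩ : ∃ a₀, a = a₀ + 3 := ⟨a - 3, by omega⟩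
        have e : T (a₀ + 3) b m = zv 0 ^ 3 * yv 2 * T a₀ b m' := by
          simp only [T, hx]; ring
        rw [e]; exact cD2 IH a₀ b m' (by omega) hsum
      · obtain ⟨b₀, rfl⟩ : ∃ b₀, b = b₀ + 1 := ⟨b - 1, by omega⟩
        have e : T a (b₀ + 1) m = zv 1 * yv 2 * T a b₀ m' := by
          simp only [T, hx]; ring
        rw [e]; exact cP2 IH a b₀ m' (by omega) hsum
    · -- i = 3
      rcases Nat.lt_or_ge a 1 with h1 | h1
      · obtain ⟨b₀, rfl⟩ : ∃ b₀, b = b₀ + 3 := ⟨b - 3, by omega⟩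
        have e : T a (b₀ + 3) m = zv 1 ^ 3 * yv 3 * T a b₀ m' := by
          simp only [T, hx]; ring
        rw [e]; exact cU3 IH a b₀ m' (by omega) hsum
      · obtain ⟨a₀, rfl⟩ : ∃ a₀, a = a₀ + 1 := ⟨a - 1, by omega⟩
        have e : T (a₀ + 1) b m = zv 0 * yv 3 * T a₀ b m' := by
          simp only [T, hx]; ring
        rw [e]; exact cP3 IH a₀ b m' (by omega) hsum
    · -- i = 4
      rcases Nat.lt_or_ge b 2 with h1 | h1
      · obtain ⟨a₀, rfl⟩ : ∃ a₀, a = a₀ + 2 := ⟨a - 2, by omega⟩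
        have e : T (a₀ + 2) b m = zv 0 ^ 2 * yv 4 * T a₀ b m' := by
          simp only [T, hx]; ring
        rw [e]; exact cD4 IH a₀ b m' (by omega) hsum
      · obtain ⟨b₀, rfl⟩ : ∃ b₀, b = b₀ + 2 := ⟨b - 2, by omega⟩
        have e : T a (b₀ + 2) m = zv 1 ^ 2 * yv 4 * T a b₀ m' := by
          simp only [T, hx]; ring
        rw [e]; exact cU4 IH a b₀ m' (by omega) hsum
    · -- i = 5
      rcases Nat.lt_or_ge b 1 with h1 | h1
      · obtain ⟨a₀, rfl⟩ : ∃ a₀, a = a₀ + 3 := ⟨a - 3, by omega⟩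
        have e : T (a₀ + 3) b m = zv 0 ^ 3 * yv 5 * T a₀ b m' := by
          simp only [T, hx]; ring
        rw [e]; exact cD5 IH a₀ b m' (by omega) hsum
      · obtain ⟨b₀, rfl⟩ : ∃ b₀, b = b₀ + 1 := ⟨b - 1, by omega⟩
        have e : T a (b₀ + 1) m = zv 1 * yv 5 * T a b₀ m' := by
          simp only [T, hx]; ring
        rw [e]; exact cP5 IH a b₀ m' (by omega) hsum

lemma weight_eval (d : Fin 2 ⊕ Fin 6 →₀ ℕ) :
    (Finsupp.weight (Sum.elim (fun _ => 1) (fun _ => 0) : Fin 2 ⊕ Fin 6 → ℕ)) d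
      = d (Sum.inl 0) + d (Sum.inl 1) ∧
    (Finsupp.weight (Sum.elim (fun _ => 0) (fun _ => 1) : Fin 2 ⊕ Fin 6 → ℕ)) d
      = ∑ i : Fin 6, d (Sum.inr i) := by
  constructor <;>
  · rw [Finsupp.weight_apply, Finsupp.sum_fintype _ _ (fun i => by simp)]
    rw [Fintype.sum_sum_type]
    simp [Fin.sum_univ_two, mul_comm]

lemma mono_mem (n : ℕ) (d : Fin 2 ⊕ Fin 6 →₀ ℕ) (c : ℂ)
    (h1 : d (Sum.inl 0) + d (Sum.inl 1) = n + 3)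
    (h2 : (∑ i : Fin 6, d (Sum.inr i)) = n) :
    (monomial d c : MvPolynomial (Fin 2 ⊕ Fin 6) ℂ) ∈ Im n := by
  have e : (monomial d c : MvPolynomial (Fin 2 ⊕ Fin 6) ℂ)
      = c • T (d (Sum.inl 0)) (d (Sum.inl 1)) (fun i => d (Sum.inr i)) := by
    rw [monomial_eq, smul_eq_C_mul, T]
    congr 1
    rw [Finsupp.prod_fintype _ _ (fun i => pow_zero _)]
    rw [Fintype.prod_sum_type, Fin.prod_univ_two]
    rfl
  rw [e]
  exact Im_smul c (key n _ _ _ h1 h2)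

/-- For every `k ≥ -1` (writing `n = k + 1 ≥ 0`), every bihomogeneous polynomial of
bidegree `(n + 3, n) = (k + 4, k + 1)` in `(z₀, z₁)` and `(y₁, …, y₆)` is in the image of
`γ` applied to 4-tuples of homogeneous polynomials of degree `n = k + 1` in `x₁, …, x₈`. -/
theorem stmt_5 (n : ℕ) (P : MvPolynomial (Fin 2 ⊕ Fin 6) ℂ)
    (hz : P.IsWeightedHomogeneous (Sum.elim (fun _ => 1) (fun _ => 0)) (n + 3))
    (hy : P.IsWeightedHomogeneous (Sum.elim (fun _ => 0) (fun _ => 1)) n) :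
    ∃ g : Fin 4 → MvPolynomial (Fin 8) ℂ,
      (∀ i, (g i).IsHomogeneous n) ∧ gammaMap g = P := by
  suffices h : P ∈ Im n by exact h
  have hrw := P.support_sum_monomial_coeff
  rw [← hrw]
  refine Finset.sum_induction _ (· ∈ Im n) (fun _ _ => Im_add) (Im_zero n) ?_
  intro d hd
  have hc : coeff d P ≠ 0 := mem_support_iff.mp hd
  exact mono_mem n d _ ((weight_eval d).1 ▸ hz hc) ((weight_eval d).2 ▸ hy hc)
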